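/- Norm equivalence: there exist constants c₀, C₀ > 0 depending only on α and N such that c₀(‖v‖²_{H^α(0,1)} + Σ_{k=2}^{N+1}|a_k|²) ≤ ‖u‖²_{L²(T,μ)} + E_α(u) ≤ C₀(‖v‖²_{H^α(0,1)} + Σ_{k=2}^{N+1}|a_k|²), where ‖u‖²_{L²(T,μ)} = ‖v‖²_{L²(0,1)} + Σ_{k=2}^{N+1}|a_k|². -/

import Mathlib

open Finset Set MeasureTheory

/-- Gagliardo (continuous–continuous) part of the hybrid energy. -/
noncomputable def Ecc (α : ℝ) (v : ℝ → ℝ) : ℝ :=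
  ∫ x in Set.Ioc (0 : ℝ) 1, ∫ y in Set.Ioc (0 : ℝ) 1,
    (v x - v y) ^ 2 / |x - y| ^ (1 + 2 * α)

/-- Continuous–discrete (interface) part of the hybrid energy. -/
noncomputable def Ecd (N : ℕ) (α : ℝ) (v : ℝ → ℝ) (a : ℕ → ℝ) : ℝ :=
  ∑ k ∈ Finset.Icc 2 (N + 1),
    ∫ x in Set.Ioc (0 : ℝ) 1, (a k - v x) ^ 2 / |(k : ℝ) - x| ^ (1 + 2 * α)

/-- Discrete–discrete part of the hybrid energy. -/
noncomputable def Edd (N : ℕ) (α : ℝ) (a : ℕ → ℝ) : ℝ :=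
  ∑ i ∈ Finset.Icc 2 (N + 1), ∑ j ∈ Finset.Icc 2 (N + 1),
    if i = j then 0 else (a i - a j) ^ 2 / |(i : ℝ) - (j : ℝ)| ^ (1 + 2 * α)

/-!
The lower bound holds with `c₀ = 1` because the interface and discrete–discrete energies are
nonnegative. For the upper bound, every pair of points meeting in those two energies is at
distance at least `1` (the atoms `2, …, N + 1` are integers and lie at distance `≥ 1` from
`(0, 1]`), so the kernel is at most `1` there and each term is bounded by
`(s - t)² ≤ 2s² + 2t²`. This gives `Ecd ≤ 2 Σ aₖ² + 2N ‖v‖²` and `Edd ≤ 4N Σ aₖ²`.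
-/

lemma sub_sq_div_rpow_le {s t d p : ℝ} (hd : 1 ≤ d) (hp : 0 ≤ p) :
    (s - t) ^ 2 / d ^ p ≤ 2 * s ^ 2 + 2 * t ^ 2 :=
  calc (s - t) ^ 2 / d ^ p ≤ (s - t) ^ 2 := div_le_self (sq_nonneg _) (Real.one_le_rpow hd hp)
    _ ≤ 2 * s ^ 2 + 2 * t ^ 2 := by nlinarith [sq_nonneg (s + t)]

lemma one_le_abs_natCast_sub_natCast {i j : ℕ} (hij : i ≠ j) : 1 ≤ |(i : ℝ) - j| := by
  have h : (1 : ℤ) ≤ |(i : ℤ) - j| := Int.one_le_abs (sub_ne_zero.mpr (by exact_mod_cast hij))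
  exact_mod_cast h

lemma setIntegral_Ioc_sub_sq_div_rpow_le {v : ℝ → ℝ} (hv : IntegrableOn (fun x => v x ^ 2) (Ioc 0 1))
    (b : ℝ) {c p : ℝ} (hc : 2 ≤ c) (hp : 0 ≤ p) :
    ∫ x in Ioc (0 : ℝ) 1, (b - v x) ^ 2 / |c - x| ^ p ≤
      2 * b ^ 2 + 2 * ∫ x in Ioc (0 : ℝ) 1, v x ^ 2 := by
  have hconst : IntegrableOn (fun _ : ℝ => 2 * b ^ 2) (Ioc (0 : ℝ) 1) :=
    integrableOn_const measure_Ioc_lt_top.ne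
  have hpointwise : ∀ x ∈ Ioc (0 : ℝ) 1,
      (b - v x) ^ 2 / |c - x| ^ p ≤ 2 * b ^ 2 + 2 * v x ^ 2 := fun x hx =>
    sub_sq_div_rpow_le (by rw [abs_of_nonneg (by linarith [hx.2])]; linarith [hx.2]) hp
  calc ∫ x in Ioc (0 : ℝ) 1, (b - v x) ^ 2 / |c - x| ^ p
      ≤ ∫ x in Ioc (0 : ℝ) 1, (2 * b ^ 2 + 2 * v x ^ 2) :=
        integral_mono_of_nonneg (Filter.Eventually.of_forall fun x => by positivity)
          (Integrable.add hconst (hv.const_mul 2))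
          ((ae_restrict_iff' measurableSet_Ioc).mpr (Filter.Eventually.of_forall hpointwise))
    _ = 2 * b ^ 2 + 2 * ∫ x in Ioc (0 : ℝ) 1, v x ^ 2 := by
        rw [integral_add hconst (hv.const_mul 2), setIntegral_const, integral_const_mul,
          Real.volume_real_Ioc_of_le zero_le_one]
        simp

lemma Ecc_nonneg (α : ℝ) (v : ℝ → ℝ) : 0 ≤ Ecc α v :=
  integral_nonneg fun _ => integral_nonneg fun _ => by positivity

lemma Ecd_nonneg (N : ℕ) (α : ℝ) (v : ℝ → ℝ) (a : ℕ → ℝ) : 0 ≤ Ecd N α v a :=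
  sum_nonneg fun _ _ => integral_nonneg fun _ => by positivity

lemma Edd_nonneg (N : ℕ) (α : ℝ) (a : ℕ → ℝ) : 0 ≤ Edd N α a :=
  sum_nonneg fun _ _ => sum_nonneg fun _ _ => by split <;> positivity

lemma card_Icc_two_succ (N : ℕ) : #(Icc 2 (N + 1)) = N := by
  rw [Nat.card_Icc]; omega

lemma Ecd_le {N : ℕ} {α : ℝ} (hα : 0 ≤ 1 + 2 * α) {v : ℝ → ℝ}
    (hv : IntegrableOn (fun x => v x ^ 2) (Ioc 0 1)) (a : ℕ → ℝ) :
    Ecd N α v a ≤ 2 * ∑ k ∈ Icc 2 (N + 1), a k ^ 2 + 2 * N * ∫ x in Ioc (0 : ℝ) 1, v x ^ 2 :=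
  calc Ecd N α v a
      ≤ ∑ k ∈ Icc 2 (N + 1), (2 * a k ^ 2 + 2 * ∫ x in Ioc (0 : ℝ) 1, v x ^ 2) :=
        sum_le_sum fun k hk => setIntegral_Ioc_sub_sq_div_rpow_le hv (a k)
          (by exact_mod_cast (mem_Icc.mp hk).1) hα
    _ = 2 * ∑ k ∈ Icc 2 (N + 1), a k ^ 2 + 2 * N * ∫ x in Ioc (0 : ℝ) 1, v x ^ 2 := by
        rw [sum_add_distrib, sum_const, card_Icc_two_succ, ← mul_sum, nsmul_eq_mul]
        ring

lemma Edd_le {N : ℕ} {α : ℝ} (hα : 0 ≤ 1 + 2 * α) (a : ℕ → ℝ) :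
    Edd N α a ≤ 4 * N * ∑ k ∈ Icc 2 (N + 1), a k ^ 2 := by
  have hterm : ∀ i j : ℕ,
      (if i = j then (0 : ℝ) else (a i - a j) ^ 2 / |(i : ℝ) - j| ^ (1 + 2 * α)) ≤
        2 * a i ^ 2 + 2 * a j ^ 2 := by
    intro i j
    split_ifs with hij
    · positivity
    · exact sub_sq_div_rpow_le (one_le_abs_natCast_sub_natCast hij) hα
  calc Edd N α a
      ≤ ∑ i ∈ Icc 2 (N + 1), ∑ j ∈ Icc 2 (N + 1), (2 * a i ^ 2 + 2 * a j ^ 2) :=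
        sum_le_sum fun i _ => sum_le_sum fun j _ => hterm i j
    _ = 4 * N * ∑ k ∈ Icc 2 (N + 1), a k ^ 2 := by
        simp only [sum_add_distrib, sum_const, card_Icc_two_succ, nsmul_eq_mul, ← mul_sum]
        ring

theorem stmt_12_general (N : ℕ) (α : ℝ) (hα : 0 < α) :
    ∃ c₀ C₀ : ℝ, 0 < c₀ ∧ 0 < C₀ ∧ ∀ (v : ℝ → ℝ) (a : ℕ → ℝ),
      IntegrableOn v (Set.Ioc (0 : ℝ) 1) →
      IntegrableOn (fun x => (v x) ^ 2) (Set.Ioc (0 : ℝ) 1) →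
      c₀ * (((∫ x in Set.Ioc (0 : ℝ) 1, (v x) ^ 2) + Ecc α v) +
            ∑ k ∈ Finset.Icc 2 (N + 1), (a k) ^ 2) ≤
          ((∫ x in Set.Ioc (0 : ℝ) 1, (v x) ^ 2) + ∑ k ∈ Finset.Icc 2 (N + 1), (a k) ^ 2) +
            (Ecc α v + 2 * Ecd N α v a + Edd N α a) ∧
      ((∫ x in Set.Ioc (0 : ℝ) 1, (v x) ^ 2) + ∑ k ∈ Finset.Icc 2 (N + 1), (a k) ^ 2) +
            (Ecc α v + 2 * Ecd N α v a + Edd N α a) ≤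
        C₀ * (((∫ x in Set.Ioc (0 : ℝ) 1, (v x) ^ 2) + Ecc α v) +
          ∑ k ∈ Finset.Icc 2 (N + 1), (a k) ^ 2) := by
  have hp : 0 ≤ 1 + 2 * α := by linarith
  refine ⟨1, 5 + 4 * N, one_pos, by positivity, fun v a _ hv => ?_⟩
  have hI : 0 ≤ ∫ x in Ioc (0 : ℝ) 1, v x ^ 2 := integral_nonneg fun _ => sq_nonneg _
  have hS : 0 ≤ ∑ k ∈ Icc 2 (N + 1), a k ^ 2 := sum_nonneg fun _ _ => sq_nonneg _
  have hN_nonneg : (0 : ℝ) ≤ N := N.cast_nonneg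
  have hEcc := Ecc_nonneg α v
  have hEcd := Ecd_nonneg N α v a
  have hEdd := Edd_nonneg N α a
  have hEcd_le := Ecd_le (N := N) hp hv a
  have hEdd_le := Edd_le (N := N) hp a
  constructor
  · linarith
  · nlinarith

/-- Norm equivalence: there are `c₀, C₀ > 0`, depending only on `α` and `N`, with
`c₀(‖v‖²_{H^α} + Σ|a_k|²) ≤ ‖u‖²_{L²(T,μ)} + E_α(u) ≤ C₀(‖v‖²_{H^α} + Σ|a_k|²)`,
where `‖u‖²_{L²(T,μ)} = ‖v‖²_{L²(0,1)} + Σ|a_k|²`. -/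
theorem stmt_12 (N : ℕ) (hN : 2 ≤ N) (α : ℝ) (hα : 0 < α) (hα1 : α < 1) :
    ∃ c₀ C₀ : ℝ, 0 < c₀ ∧ 0 < C₀ ∧ ∀ (v : ℝ → ℝ) (a : ℕ → ℝ),
      IntegrableOn v (Set.Ioc (0 : ℝ) 1) →
      IntegrableOn (fun x => (v x) ^ 2) (Set.Ioc (0 : ℝ) 1) →
      c₀ * (((∫ x in Set.Ioc (0 : ℝ) 1, (v x) ^ 2) + Ecc α v) +
            ∑ k ∈ Finset.Icc 2 (N + 1), (a k) ^ 2) ≤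
          ((∫ x in Set.Ioc (0 : ℝ) 1, (v x) ^ 2) + ∑ k ∈ Finset.Icc 2 (N + 1), (a k) ^ 2) +
            (Ecc α v + 2 * Ecd N α v a + Edd N α a) ∧
      ((∫ x in Set.Ioc (0 : ℝ) 1, (v x) ^ 2) + ∑ k ∈ Finset.Icc 2 (N + 1), (a k) ^ 2) +
            (Ecc α v + 2 * Ecd N α v a + Edd N α a) ≤
        C₀ * (((∫ x in Set.Ioc (0 : ℝ) 1, (v x) ^ 2) + Ecc α v) +
          ∑ k ∈ Finset.Icc 2 (N + 1), (a k) ^ 2) :=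
  stmt_12_general N α hα
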